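/- Let 0 < p < 1, q = 1 - p, and consider the random walk strongly reflected at the origin: S_0 = 0 and S_j = |S_{j-1} + X_j| for j ≥ 1, with M_n = max_{0≤j≤n} S_j. Then for every real λ with |λ| < 1, the series Σ_{n=1}^∞ λ^n · P{M_n = 1} converges and equals λ(1 + qλ)/(1 - qλ²). -/

import Mathlib

open Finset Filter

/-- The value `±1` of a single step of the walk, driven by a Boolean. -/
def step (b : Bool) : ℤ := if b then 1 else -1

/-- The probability weight of the path `ω` when `P{Xᵢ = 1} = p`, `P{Xᵢ = -1} = 1 - p`,
independently over `i`. -/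
def wt (p : ℝ) {n : ℕ} (ω : Fin n → Bool) : ℝ :=
  ∏ i, if ω i then p else 1 - p

/-- The probability of an event `A` for a walk of length `n`. -/
noncomputable def prob (p : ℝ) {n : ℕ} (A : Set (Fin n → Bool)) : ℝ :=
  ∑ ω : Fin n → Bool, A.indicator (wt p) ω

/-- The walk strongly reflected at the origin: `S_0 = 0`, `S_{j+1} = |S_j + X_{j+1}|`. -/
def walkStrong {n : ℕ} (ω : Fin n → Bool) : ℕ → ℤ
  | 0 => 0
  | j + 1 => |walkStrong ω j + if h : j < n then step (ω ⟨j, h⟩) else 0|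

/-- The running maximum `M_n = max_{0 ≤ j ≤ n} S_j` of the strongly reflected walk. -/
def mStrong {n : ℕ} (ω : Fin n → Bool) : ℤ :=
  (Finset.range (n + 1)).sup' (by simp) (walkStrong ω)

/-!
Started at `0`, the strongly reflected walk stays in `{0, 1}` exactly when it alternates
`0, 1, 0, 1, …`: a step from `0` lands on `1` whatever its sign, while a step from `1`, i.e. one
taken at an odd time, has to go down. So `M_n = 1` is the event that the `⌊n/2⌋` steps taken at odd
times all go down, of probability `q ^ ⌊n/2⌋`, and the generating function splits into two
geometric series in `q λ²`, over even and odd `n`.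
-/

section StronglyReflectedWalk

variable {n : ℕ}

lemma walkStrong_succ (ω : Fin n → Bool) {j : ℕ} (hj : j < n) :
    walkStrong ω (j + 1) = |walkStrong ω j + step (ω ⟨j, hj⟩)| := by
  rw [walkStrong, dif_pos hj]

lemma walkStrong_eq_mod_two (ω : Fin n → Bool) {j : ℕ} (hj : j ≤ n)
    (hω : ∀ i : Fin n, i.val < j → i.val % 2 = 1 → ω i = false) :
    walkStrong ω j = (j % 2 : ℕ) := by
  induction j with
  | zero => rfl
  | succ j ih =>
    have hjn : j < n := hj
    rw [walkStrong_succ ω hjn, ih hjn.le fun i hi => hω i (hi.trans j.lt_succ_self)]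
    rcases Nat.mod_two_eq_zero_or_one j with h | h
    · rw [h, show (j + 1) % 2 = 1 by omega]
      cases ω ⟨j, hjn⟩ <;> rfl
    · rw [h, show (j + 1) % 2 = 0 by omega, hω ⟨j, hjn⟩ j.lt_succ_self h]
      rfl

lemma odd_steps_false_of_walkStrong_le_one (ω : Fin n → Bool) (H : ∀ j ≤ n, walkStrong ω j ≤ 1) :
    ∀ i : Fin n, i.val % 2 = 1 → ω i = false := by
  rintro ⟨i, hi⟩ hodd
  induction i using Nat.strong_induction_on with
  | _ i ih =>
    have hSi : walkStrong ω i = 1 := by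
      rw [walkStrong_eq_mod_two ω hi.le fun k hk hkodd => ih k hk k.isLt hkodd, hodd]
      rfl
    by_contra hup
    rw [Bool.not_eq_false] at hup
    have := H (i + 1) hi
    rw [walkStrong_succ ω hi, hSi, hup] at this
    norm_num [step] at this

lemma walkStrong_one (ω : Fin (n + 1) → Bool) : walkStrong ω 1 = 1 := by
  rw [walkStrong_succ ω n.succ_pos]
  cases h : ω 0 <;> simp [walkStrong, step, h]

lemma mStrong_eq_one_iff (ω : Fin (n + 1) → Bool) :
    mStrong ω = 1 ↔ ∀ i : Fin (n + 1), i.val % 2 = 1 → ω i = false := by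
  have hle : mStrong ω ≤ 1 ↔ ∀ j ≤ n + 1, walkStrong ω j ≤ 1 := by
    simp only [mStrong, sup'_le_iff, mem_range, Nat.lt_succ_iff]
  have hge : 1 ≤ mStrong ω := walkStrong_one ω ▸ le_sup' _ (by simp)
  rw [le_antisymm_iff, and_iff_left hge, hle]
  refine ⟨odd_steps_false_of_walkStrong_le_one ω, fun hω j hj => ?_⟩
  rw [walkStrong_eq_mod_two ω hj fun i _ => hω i]
  exact_mod_cast Nat.le_of_lt_succ (Nat.mod_lt j two_pos)

end StronglyReflectedWalk

lemma prob_forall_mem_eq_false (p : ℝ) {n : ℕ} (s : Finset (Fin n)) :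
    prob p {ω : Fin n → Bool | ∀ i ∈ s, ω i = false} = (1 - p) ^ s.card := by
  classical
  set A : Set (Fin n → Bool) := {ω | ∀ i ∈ s, ω i = false}
  set f : Fin n → Bool → ℝ := fun i b => if i ∈ s ∧ b = true then 0 else if b then p else 1 - p
  have hterm (ω : Fin n → Bool) :
      A.indicator (wt p) ω = ∏ i, f i (ω i) := by
    by_cases h : ∀ i ∈ s, ω i = false
    · rw [Set.indicator_of_mem (show ω ∈ A from h)]
      refine prod_congr rfl fun i _ => ?_
      by_cases hi : i ∈ s <;> simp [f, hi, h]
    · rw [Set.indicator_of_notMem (show ω ∉ A from h)]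
      obtain ⟨i, hi, hup⟩ : ∃ i ∈ s, ω i = true := by simpa using h
      exact (prod_eq_zero (mem_univ i) (by simp [f, hi, hup])).symm
  calc prob p A
      = ∑ ω : Fin n → Bool, ∏ i, f i (ω i) := sum_congr rfl fun ω _ => hterm ω
    _ = ∏ i, ∑ b, f i b := (Fintype.prod_sum f).symm
    _ = ∏ i, if i ∈ s then 1 - p else 1 := by
        refine prod_congr rfl fun i _ => ?_
        by_cases hi : i ∈ s <;> simp [f, hi]
    _ = (1 - p) ^ s.card := by rw [Fintype.prod_ite_mem, prod_const]

lemma card_filter_val_mod_two_eq_one (m : ℕ) : #{i : Fin m | i.val % 2 = 1} = m / 2 := by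
  rw [card_filter, Fin.sum_univ_eq_sum_range (fun i => if i % 2 = 1 then 1 else 0)]
  induction m with
  | zero => rfl
  | succ m ih =>
    rw [sum_range_succ, ih]
    split_ifs <;> omega

lemma prob_mStrong_eq_one (p : ℝ) (n : ℕ) :
    prob p {ω : Fin (n + 1) → Bool | mStrong ω = 1} = (1 - p) ^ ((n + 1) / 2) := by
  have hevent : {ω : Fin (n + 1) → Bool | mStrong ω = 1} =
      {ω | ∀ i ∈ ({i : Fin (n + 1) | i.val % 2 = 1} : Finset _), ω i = false} := by
    ext ω
    simp [mStrong_eq_one_iff]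
  rw [hevent, prob_forall_mem_eq_false, card_filter_val_mod_two_eq_one]

lemma hasSum_pow_succ_mul_pow_succ_div_two {q l : ℝ} (h : |q * l ^ 2| < 1) :
    HasSum (fun n : ℕ => l ^ (n + 1) * q ^ ((n + 1) / 2)) (l * (1 + q * l) / (1 - q * l ^ 2)) := by
  have hgeo := hasSum_geometric_of_abs_lt_one h
  have hne : 1 - q * l ^ 2 ≠ 0 := (sub_pos.mpr ((le_abs_self _).trans_lt h)).ne'
  have heven : HasSum (fun k : ℕ => l ^ (2 * k + 1) * q ^ ((2 * k + 1) / 2))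
      (l * (1 - q * l ^ 2)⁻¹) := by
    refine (hgeo.mul_left l).congr_fun fun k => ?_
    rw [show (2 * k + 1) / 2 = k by omega]
    ring
  have hodd : HasSum (fun k : ℕ => l ^ (2 * k + 1 + 1) * q ^ ((2 * k + 1 + 1) / 2))
      (q * l ^ 2 * (1 - q * l ^ 2)⁻¹) := by
    refine (hgeo.mul_left (q * l ^ 2)).congr_fun fun k => ?_
    rw [show (2 * k + 1 + 1) / 2 = k + 1 by omega]
    ring
  have hsplit : l * (1 + q * l) / (1 - q * l ^ 2) =
      l * (1 - q * l ^ 2)⁻¹ + q * l ^ 2 * (1 - q * l ^ 2)⁻¹ := by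
    field_simp
  rw [hsplit]
  exact heven.even_add_odd hodd

theorem statement10 (p : ℝ) (hp0 : 0 < p) (hp1 : p < 1) (l : ℝ) (hl : |l| < 1) :
    HasSum (fun n : ℕ => l ^ (n + 1) * prob p {ω : Fin (n + 1) → Bool | mStrong ω = 1})
      (l * (1 + (1 - p) * l) / (1 - (1 - p) * l ^ 2)) := by
  have hq : |(1 - p) * l ^ 2| < 1 := by
    rw [abs_mul, abs_of_pos (sub_pos.mpr hp1), abs_pow]
    exact mul_lt_one_of_nonneg_of_lt_one_left (sub_pos.mpr hp1).le (by linarith)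
      (pow_le_one₀ (abs_nonneg l) hl.le)
  simp only [prob_mStrong_eq_one]
  exact hasSum_pow_succ_mul_pow_succ_div_two hq
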